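/- Let P ⊆ (2^ℕ)^ω be a perfect product, m < ω, σ₀, τ₀ ∈ 2^m, and let B ⊆ P_{σ₀}, B' ⊆ P_{τ₀} be perfect products such that B ↾ D(σ₀,τ₀) = B' ↾ D(σ₀,τ₀), where D(σ,τ) = ω \ {φ(i) : i < m, σ(i) ≠ τ(i)}. Then there is a perfect product R ≤ₘ P with R_{σ₀} = B and R_{τ₀} = B'. -/

import Mathlib

/-!
Work coordinate by coordinate. On a single perfect set `X`, the pieces `X_u` with `|u| = n`
can be replaced independently by arbitrary perfect subsets `F u ⊆ X_u`: by induction on `n`,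
glue the solutions for `X^0` and `X^1`; the union of two perfect sets lying in different halves
of `X` has the same stem as `X`, so splitting the union gives back the two halves. In coordinate
`j` the strings `σ₀/j` and `τ₀/j` have length `q(m,j)`, so prescribe `B j` at `σ₀/j`, `B' j` at
`τ₀/j` and leave every other piece of `P j` unchanged. This is consistent because
`σ₀/j = τ₀/j` forces `j ∈ D(σ₀,τ₀)`, and agreement of the restrictions of two products with
nonempty factors to `D` means that their factors agree on `D`.
-/

/-- Cantor space `2^ℕ`. -/
abbrev Cantor := ℕ → Bool

/-- A perfect subset of Cantor space: nonempty, closed, no isolated points. -/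
def PerfectSet (X : Set Cantor) : Prop := X.Nonempty ∧ Perfect X

/-- The length of the stem of `X`: the length of the longest finite binary string
that is an initial segment of every element of `X`. -/
noncomputable def stemLen (X : Set Cantor) : ℕ :=
  sSup {n | ∀ x ∈ X, ∀ y ∈ X, ∀ i < n, x i = y i}

/-- Simple splitting piece `X^i = {x ∈ X | x(|stem X|) = i}`. -/
noncomputable def splitPiece (X : Set Cantor) (i : Bool) : Set Cantor :=
  {x ∈ X | x (stemLen X) = i}

/-- Iterated simple splitting `X_s`: `X_Λ = X`, `X_{s⌢i} = (X_s)^i`. -/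
noncomputable def iterSplit (X : Set Cantor) (s : List Bool) : Set Cantor :=
  s.foldl splitPiece X

/-- Refinement `X ≤ₙ Y`: `X_s ⊆ Y_s` for every binary string `s` of length `n`. -/
def refines (n : ℕ) (X Y : Set Cantor) : Prop :=
  ∀ s : List Bool, s.length = n → iterSplit X s ⊆ iterSplit Y s

/-- The perfect product `∏_k P(k) ⊆ (2^ℕ)^ω` determined by coordinatewise sets. -/
def prodSet (P : ℕ → Set Cantor) : Set (ℕ → Cantor) := {x | ∀ k, x k ∈ P k}

/-- `P` is a perfect product (given by its coordinates `P k`). -/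
def PerfectProduct (P : ℕ → Set Cantor) : Prop := ∀ k, PerfectSet (P k)

/-- `q(m,j) = |{k < m : φ(k) = j}|`. -/
def qcount (phi : ℕ → ℕ) (m j : ℕ) : ℕ :=
  ((Finset.range m).filter fun k => phi k = j).card

/-- `σ/j`: the substring of `σ` read along the positions `k < |σ|` with `φ(k) = j`. -/
def subAlong (phi : ℕ → ℕ) (j : ℕ) (σ : List Bool) : List Bool :=
  ((List.range σ.length).filter fun k => phi k = j).map fun k => σ.getD k false

/-- The split piece `P_σ` of a perfect product, coordinatewise: `P_σ(j) = (P(j))_{σ/j}`. -/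
noncomputable def prodSplit (phi : ℕ → ℕ) (P : ℕ → Set Cantor) (σ : List Bool) :
    ℕ → Set Cantor :=
  fun j => iterSplit (P j) (subAlong phi j σ)

/-- Refinement of perfect products: `P ≤ₘ Q` iff `P(j) ≤_{q(m,j)} Q(j)` for all `j`. -/
def prodRef (phi : ℕ → ℕ) (m : ℕ) (P Q : ℕ → Set Cantor) : Prop :=
  ∀ j, refines (qcount phi m j) (P j) (Q j)

/-- `D(σ,τ) = ω \ {φ(i) : i < m, σ(i) ≠ τ(i)}` (for strings of length `m`). -/
def Dset (phi : ℕ → ℕ) (m : ℕ) (σ τ : List Bool) : Set ℕ :=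
  {j | ¬ ∃ i < m, σ.getD i false ≠ τ.getD i false ∧ phi i = j}

theorem Perfect.nontrivial {α : Type*} [TopologicalSpace α] {C : Set α} (hC : Perfect C)
    (hne : C.Nonempty) : C.Nontrivial := by
  obtain ⟨x, hx⟩ := hne
  obtain ⟨y, ⟨-, hy⟩, hyx⟩ := accPt_iff_nhds.mp (hC.acc x hx) Set.univ Filter.univ_mem
  exact ⟨y, hy, x, hx, hyx⟩

theorem Perfect.iUnion {α ι : Type*} [TopologicalSpace α] [Finite ι] {C : ι → Set α}
    (hC : ∀ i, Perfect (C i)) : Perfect (⋃ i, C i) := by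
  refine ⟨isClosed_iUnion_of_finite fun i => (hC i).closed, fun x hx => ?_⟩
  obtain ⟨i, hi⟩ := Set.mem_iUnion.mp hx
  exact ((hC i).acc x hi).mono (Filter.principal_mono.mpr (Set.subset_iUnion C i))

namespace PerfectSet

variable {X : Set Cantor}

theorem bddAbove_stemLen_set (hX : PerfectSet X) :
    BddAbove {n | ∀ x ∈ X, ∀ y ∈ X, ∀ i < n, x i = y i} := by
  obtain ⟨x, hx, y, hy, hxy⟩ := hX.2.nontrivial hX.1
  obtain ⟨i, hi⟩ := Function.ne_iff.mp hxy
  exact ⟨i, fun n hn => not_lt.mp fun hin => hi (hn x hx y hy i hin)⟩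

theorem apply_eq_of_lt_stemLen (hX : PerfectSet X) {x y : Cantor} (hx : x ∈ X) (hy : y ∈ X)
    {i : ℕ} (hi : i < stemLen X) : x i = y i :=
  Nat.sSup_mem ⟨0, by simp⟩ hX.bddAbove_stemLen_set x hx y hy i hi

theorem exists_apply_stemLen_ne (hX : PerfectSet X) :
    ∃ x ∈ X, ∃ y ∈ X, x (stemLen X) ≠ y (stemLen X) := by
  have hnot : stemLen X + 1 ∉ {n | ∀ x ∈ X, ∀ y ∈ X, ∀ i < n, x i = y i} := fun h =>
    Nat.not_succ_le_self _ (le_csSup hX.bddAbove_stemLen_set h)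
  simp only [Set.mem_ofPred_eq, not_forall] at hnot
  obtain ⟨x, hx, y, hy, i, hi, hne⟩ := hnot
  obtain rfl : i = stemLen X := by
    by_contra h
    exact hne (hX.apply_eq_of_lt_stemLen hx hy (by omega))
  exact ⟨x, hx, y, hy, hne⟩

theorem splitPiece_nonempty (hX : PerfectSet X) (i : Bool) : (splitPiece X i).Nonempty := by
  obtain ⟨x, hx, y, hy, hne⟩ := hX.exists_apply_stemLen_ne
  by_cases h : x (stemLen X) = i
  · exact ⟨x, hx, h⟩
  · exact ⟨y, hy, by cases i <;> simp_all⟩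

protected theorem splitPiece (hX : PerfectSet X) (i : Bool) : PerfectSet (splitPiece X i) := by
  have hopen : IsOpen ((fun y : Cantor => y (stemLen X)) ⁻¹' {i}) :=
    (continuous_apply _).isOpen_preimage _ (isOpen_discrete _)
  refine ⟨hX.splitPiece_nonempty i,
    hX.2.closed.inter (isClosed_eq (continuous_apply _) continuous_const), ?_⟩
  have := hX.2.acc.open_inter hopen
  rwa [Set.inter_comm] at this

protected theorem iterSplit (hX : PerfectSet X) (u : List Bool) : PerfectSet (iterSplit X u) := by
  induction u generalizing X with
  | nil => exact hX
  | cons i u ih => exact ih (hX.splitPiece i)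

end PerfectSet

theorem splitPiece_subset (X : Set Cantor) (i : Bool) : splitPiece X i ⊆ X :=
  Set.sep_subset _ _

theorem iterSplit_subset (X : Set Cantor) (u : List Bool) : iterSplit X u ⊆ X := by
  induction u generalizing X with
  | nil => exact subset_rfl
  | cons i u ih => exact (ih (splitPiece X i)).trans (splitPiece_subset X i)

section Gluing

variable {X : Set Cantor} {Y : Bool → Set Cantor}

theorem stemLen_iUnion_of_subset_splitPiece (hX : PerfectSet X)
    (hYX : ∀ i, Y i ⊆ splitPiece X i) (hY : ∀ i, (Y i).Nonempty) :
    stemLen (⋃ i, Y i) = stemLen X := by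
  obtain ⟨x₀, hx₀⟩ := hY false
  obtain ⟨x₁, hx₁⟩ := hY true
  have hsub : (⋃ i, Y i) ⊆ X := Set.iUnion_subset fun i => (hYX i).trans (splitPiece_subset X i)
  have hset : {n | ∀ x ∈ ⋃ i, Y i, ∀ y ∈ ⋃ i, Y i, ∀ k < n, x k = y k} = Set.Iic (stemLen X) := by
    ext n
    refine ⟨fun hn => Set.mem_Iic.mpr <| not_lt.mp fun hlt => ?_, fun hn x hx y hy k hk =>
      hX.apply_eq_of_lt_stemLen (hsub hx) (hsub hy) (hk.trans_le hn)⟩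
    have := hn x₀ (Set.mem_iUnion_of_mem _ hx₀) x₁ (Set.mem_iUnion_of_mem _ hx₁) _ hlt
    simp [(hYX false hx₀).2, (hYX true hx₁).2] at this
  rw [stemLen, hset, csSup_Iic]

theorem splitPiece_iUnion_of_subset_splitPiece (hX : PerfectSet X)
    (hYX : ∀ i, Y i ⊆ splitPiece X i) (hY : ∀ i, (Y i).Nonempty) (i : Bool) :
    splitPiece (⋃ j, Y j) i = Y i := by
  ext x
  simp only [splitPiece, stemLen_iUnion_of_subset_splitPiece hX hYX hY, Set.mem_ofPred_eq,
    Set.mem_iUnion]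
  refine ⟨fun ⟨⟨j, hj⟩, hxi⟩ => ?_, fun hx => ⟨⟨i, hx⟩, (hYX i hx).2⟩⟩
  obtain rfl : j = i := (hYX j hj).2.symm.trans hxi
  exact hj

end Gluing

theorem PerfectSet.exists_iterSplit_eq {X : Set Cantor} (hX : PerfectSet X) {n : ℕ}
    {F : List Bool → Set Cantor}
    (hF : ∀ u, u.length = n → PerfectSet (F u) ∧ F u ⊆ iterSplit X u) :
    ∃ Y, PerfectSet Y ∧ Y ⊆ X ∧ ∀ u, u.length = n → iterSplit Y u = F u := by
  induction n generalizing X F with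
  | zero =>
    refine ⟨F [], (hF [] rfl).1, (hF [] rfl).2, fun u hu => ?_⟩
    rw [List.length_eq_zero_iff.mp hu]
    rfl
  | succ n ih =>
    choose Y hYp hYX hYF using fun i : Bool =>
      ih (hX.splitPiece i) (F := fun u => F (i :: u)) fun u hu => hF (i :: u) (by simp [hu])
    refine ⟨⋃ i, Y i, ⟨⟨_, Set.mem_iUnion_of_mem false (hYp false).1.some_mem⟩,
      Perfect.iUnion fun i => (hYp i).2⟩,
      Set.iUnion_subset fun i => (hYX i).trans (splitPiece_subset X i), ?_⟩
    rintro (_ | ⟨i, u⟩) hu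
    · simp at hu
    · change iterSplit (splitPiece (⋃ j, Y j) i) u = F (i :: u)
      rw [splitPiece_iUnion_of_subset_splitPiece hX hYX (fun j => (hYp j).1)]
      exact hYF i u (by simpa using hu)

theorem PerfectSet.exists_refines_iterSplit_eq_pair {X : Set Cantor} (hX : PerfectSet X)
    {n : ℕ} {s t : List Bool} (hs : s.length = n) (ht : t.length = n) {A A' : Set Cantor}
    (hA : PerfectSet A) (hA' : PerfectSet A') (hAX : A ⊆ iterSplit X s)
    (hA'X : A' ⊆ iterSplit X t) (hst : s = t → A = A') :
    ∃ Y, PerfectSet Y ∧ refines n Y X ∧ iterSplit Y s = A ∧ iterSplit Y t = A' := by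
  classical
  let F u := if u = s then A else if u = t then A' else iterSplit X u
  have hF : ∀ u, u.length = n → PerfectSet (F u) ∧ F u ⊆ iterSplit X u := by
    intro u _
    dsimp only [F]
    split_ifs with hus hut
    · exact hus ▸ ⟨hA, hAX⟩
    · exact hut ▸ ⟨hA', hA'X⟩
    · exact ⟨hX.iterSplit u, subset_rfl⟩
  obtain ⟨Y, hY, -, hYF⟩ := hX.exists_iterSplit_eq hF
  refine ⟨Y, hY, fun u hu => hYF u hu ▸ (hF u hu).2, by simp [hYF s hs, F], ?_⟩
  rw [hYF t ht]
  by_cases hts : t = s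
  · simp [F, hts, hst hts.symm]
  · simp [F, hts]

theorem subAlong_length (phi : ℕ → ℕ) (j : ℕ) {m : ℕ} {σ : List Bool} (hσ : σ.length = m) :
    (subAlong phi j σ).length = qcount phi m j := by
  simp [subAlong, qcount, hσ, Finset.card, Finset.filter, Finset.range, Multiset.range]

theorem mem_Dset_of_subAlong_eq {phi : ℕ → ℕ} {m j : ℕ} {σ τ : List Bool}
    (hσ : σ.length = m) (hτ : τ.length = m) (h : subAlong phi j σ = subAlong phi j τ) :
    j ∈ Dset phi m σ τ := by
  rintro ⟨i, him, hne, hphi⟩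
  rw [subAlong, subAlong, hσ, hτ, List.map_inj_left] at h
  exact hne (h i (by simp [List.mem_filter, him, hphi]))

section Restrict

variable {U : Set ℕ} {B B' : ℕ → Set Cantor} {j : ℕ}

theorem subset_of_restrict_image_prodSet_subset (hB : ∀ k, (B k).Nonempty)
    (h : U.domRestrict '' prodSet B ⊆ U.domRestrict '' prodSet B') (hj : j ∈ U) : B j ⊆ B' j := by
  classical
  intro b hb
  let x := Function.update (fun k => (hB k).some) j b
  have hx : x ∈ prodSet B := fun k => by
    rcases eq_or_ne k j with rfl | hk
    · simpa [x] using hb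
    · simpa [x, hk] using (hB k).some_mem
  obtain ⟨x', hx', hxx'⟩ := h ⟨x, hx, rfl⟩
  have hx'j : x' j = b := by simpa [x] using congrFun hxx' ⟨j, hj⟩
  exact hx'j ▸ hx' j

theorem eq_of_restrict_image_prodSet_eq (hB : ∀ k, (B k).Nonempty) (hB' : ∀ k, (B' k).Nonempty)
    (h : U.domRestrict '' prodSet B = U.domRestrict '' prodSet B') (hj : j ∈ U) : B j = B' j :=
  (subset_of_restrict_image_prodSet_subset hB h.subset hj).antisymm
    (subset_of_restrict_image_prodSet_subset hB' h.symm.subset hj)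

end Restrict

theorem stmt8_general (phi : ℕ → ℕ)
    (P : ℕ → Set Cantor) (hP : PerfectProduct P) (m : ℕ)
    (σ₀ τ₀ : List Bool) (hσ₀ : σ₀.length = m) (hτ₀ : τ₀.length = m)
    (B B' : ℕ → Set Cantor) (hB : PerfectProduct B) (hB' : PerfectProduct B')
    (hBP : ∀ j, B j ⊆ prodSplit phi P σ₀ j)
    (hB'P : ∀ j, B' j ⊆ prodSplit phi P τ₀ j)
    (hagree : (Dset phi m σ₀ τ₀).restrict '' prodSet B =
      (Dset phi m σ₀ τ₀).restrict '' prodSet B') :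
    ∃ R : ℕ → Set Cantor, PerfectProduct R ∧ prodRef phi m R P ∧
      prodSplit phi R σ₀ = B ∧ prodSplit phi R τ₀ = B' := by
  have hD : ∀ j, subAlong phi j σ₀ = subAlong phi j τ₀ → B j = B' j := fun j h =>
    eq_of_restrict_image_prodSet_eq (fun k => (hB k).1) (fun k => (hB' k).1) hagree
      (mem_Dset_of_subAlong_eq hσ₀ hτ₀ h)
  choose R hR hRP hRσ hRτ using fun j =>
    (hP j).exists_refines_iterSplit_eq_pair (subAlong_length phi j hσ₀)
      (subAlong_length phi j hτ₀) (hB j) (hB' j) (hBP j) (hB'P j) (hD j)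
  exact ⟨R, hR, hRP, funext hRσ, funext hRτ⟩

/-- if perfect products `B ⊆ P_{σ₀}` and `B' ⊆ P_{τ₀}` agree on
`D(σ₀,τ₀)`, there is a perfect product `R ≤ₘ P` with `R_{σ₀} = B` and `R_{τ₀} = B'`. -/
theorem stmt8 (phi : ℕ → ℕ) (hphi : ∀ j, {k | phi k = j}.Infinite)
    (P : ℕ → Set Cantor) (hP : PerfectProduct P) (m : ℕ)
    (σ₀ τ₀ : List Bool) (hσ₀ : σ₀.length = m) (hτ₀ : τ₀.length = m)
    (B B' : ℕ → Set Cantor) (hB : PerfectProduct B) (hB' : PerfectProduct B')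
    (hBP : ∀ j, B j ⊆ prodSplit phi P σ₀ j)
    (hB'P : ∀ j, B' j ⊆ prodSplit phi P τ₀ j)
    (hagree : (Dset phi m σ₀ τ₀).restrict '' prodSet B =
      (Dset phi m σ₀ τ₀).restrict '' prodSet B') :
    ∃ R : ℕ → Set Cantor, PerfectProduct R ∧ prodRef phi m R P ∧
      prodSplit phi R σ₀ = B ∧ prodSplit phi R τ₀ = B' :=
  stmt8_general phi P hP m σ₀ τ₀ hσ₀ hτ₀ B B' hB hB' hBP hB'P hagree
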